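/- arXiv:1212.1074 — 4 statements merged into one kernel-verified Lean document; each statement's English description precedes it below -/
import Mathlib

section
/- Universal property of saturation (the reflection of DTop onto saturated d-spaces): let (X, dX) be a d-space and let (Y, dY) be a saturated d-space. A continuous map f : X → Y maps dX into dY if and only if it maps d̂X into dY. In other words, f is a morphism of d-spaces (X, dX) → (Y, dY) if and only if it is a morphism (X, d̂X) → (Y, dY). -/
open unitInterval Topology Set

/-- Concatenation of two continuous paths `p q : C(I, X)` with `p 1 = q 0`,
traversing `p` on `[0, 1/2]` and `q` on `[1/2, 1]` (both at double speed). -/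
noncomputable def concatPath {X : Type*} [TopologicalSpace X]
    (p q : C(unitInterval, X)) (h : p 1 = q 0) : C(unitInterval, X) :=
  ((⟨p, rfl, rfl⟩ : Path (p 0) (p 1)).trans
    ((⟨q, rfl, rfl⟩ : Path (q 0) (q 1)).cast h rfl)).toContinuousMap

/-- A d-space structure on a topological space `X`: a set of continuous paths
`I → X` containing the constant paths, closed under concatenation and under
precomposition with continuous non-decreasing maps `I → I`. -/
structure DSpace (X : Type*) [TopologicalSpace X] where
  d : Set C(unitInterval, X)
  const_mem : ∀ x : X, ContinuousMap.const unitInterval x ∈ d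
  concat_mem : ∀ p ∈ d, ∀ q ∈ d, ∀ h : p 1 = q 0, concatPath p q h ∈ d
  reparam_mem : ∀ p ∈ d, ∀ φ : C(unitInterval, unitInterval), Monotone ⇑φ → p.comp φ ∈ d

/-- `c` is a directed function on the (open) set `U` for the set of directed
paths `d`: it is continuous on `U` and non-decreasing along every directed path
with image contained in `U`. -/
def IsDirectedFn {X : Type*} [TopologicalSpace X] (d : Set C(unitInterval, X))
    (U : Set X) (c : X → unitInterval) : Prop :=
  ContinuousOn c U ∧ ∀ p ∈ d, Set.range ⇑p ⊆ U → Monotone (c ∘ ⇑p)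

/-- A path `p` is weakly directed when, for every directed function `c` on an
open `U`, the map `c ∘ p` is locally non-decreasing on `p ⁻¹' U`. -/
def IsWeaklyDirected {X : Type*} [TopologicalSpace X] (d : Set C(unitInterval, X))
    (p : C(unitInterval, X)) : Prop :=
  ∀ U : Set X, IsOpen U → ∀ c : X → unitInterval, IsDirectedFn d U c →
    ∀ t : unitInterval, p t ∈ U →
      ∃ V ∈ 𝓝 t, V ⊆ ⇑p ⁻¹' U ∧ MonotoneOn (c ∘ ⇑p) V

/-- The set `d̂X` of weakly directed paths. -/
def satPaths {X : Type*} [TopologicalSpace X] (d : Set C(unitInterval, X)) :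
    Set C(unitInterval, X) :=
  {p | IsWeaklyDirected d p}

/-- A set of directed paths is saturated when every weakly directed path is directed. -/
def IsSaturated {X : Type*} [TopologicalSpace X] (d : Set C(unitInterval, X)) : Prop :=
  satPaths d = d

/-! Directed functions pull back along maps sending `dX` into `dY`, so such maps send weakly
directed paths to weakly directed paths, which are directed when `dY` is saturated. Conversely,
every directed path is weakly directed: its restriction to a subinterval `[a, b]` is the
reparametrisation by the monotone clamp `s ↦ max a (min b s)`, hence again directed. -/

def unitInterval.clamp (a b : I) : C(I, I) :=
  ⟨fun s => max a (min b s), by fun_prop⟩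

lemma unitInterval.clamp_monotone (a b : I) : Monotone (clamp a b) :=
  fun _ _ h => max_le_max le_rfl (min_le_min le_rfl h)

lemma unitInterval.clamp_of_mem {a b s : I} (hs : s ∈ Icc a b) : clamp a b s = s := by
  simp [clamp, hs.1, hs.2]

lemma unitInterval.clamp_mem {a b : I} (hab : a ≤ b) (s : I) : clamp a b s ∈ Icc a b :=
  ⟨le_max_left _ _, max_le hab (min_le_left _ _)⟩

section

variable {X Y : Type*} [TopologicalSpace X] [TopologicalSpace Y]

lemma DSpace.monotoneOn_comp_of_Icc_subset (D : DSpace X) {p : C(I, X)} (hp : p ∈ D.d)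
    {U : Set X} {c : X → I} (hc : IsDirectedFn D.d U c) {a b : I} (hU : Icc a b ⊆ p ⁻¹' U) :
    MonotoneOn (c ∘ p) (Icc a b) := by
  intro x hx y hy hxy
  have hab : a ≤ b := hx.1.trans hx.2
  have hrange : range (p.comp (clamp a b)) ⊆ U := by
    rintro _ ⟨s, rfl⟩
    exact hU (clamp_mem hab s)
  have hmono := hc.2 _ (D.reparam_mem p hp _ (clamp_monotone a b)) hrange hxy
  simpa [clamp_of_mem hx, clamp_of_mem hy] using hmono

lemma DSpace.d_subset_satPaths (D : DSpace X) : D.d ⊆ satPaths D.d := by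
  intro p hp U hU c hc t ht
  obtain ⟨a, b, -, hnhds, hsub⟩ :=
    exists_Icc_mem_subset_of_mem_nhds ((hU.preimage p.continuous).mem_nhds ht)
  exact ⟨Icc a b, hnhds, hsub, D.monotoneOn_comp_of_Icc_subset hp hc hsub⟩

lemma IsDirectedFn.comp {d : Set C(I, X)} {e : Set C(I, Y)} {f : C(X, Y)}
    (hf : ∀ p ∈ d, f.comp p ∈ e) {U : Set Y} {c : Y → I} (hc : IsDirectedFn e U c) :
    IsDirectedFn d (f ⁻¹' U) (c ∘ f) := by
  refine ⟨hc.1.comp f.continuous.continuousOn (mapsTo_preimage _ _), fun q hq hrange => ?_⟩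
  exact hc.2 _ (hf q hq) (range_subset_iff.2 fun s => hrange ⟨s, rfl⟩)

lemma IsWeaklyDirected.map {d : Set C(I, X)} {e : Set C(I, Y)} {f : C(X, Y)}
    (hf : ∀ p ∈ d, f.comp p ∈ e) {p : C(I, X)} (hp : IsWeaklyDirected d p) :
    IsWeaklyDirected e (f.comp p) :=
  fun _ hU _ hc t ht => hp _ (hU.preimage f.continuous) _ (hc.comp hf) t ht

end

/-- Universal property of the saturation: for a d-space `(X, dX)` and a saturated
d-space `(Y, dY)`, a continuous map `f : X → Y` maps `dX` into `dY` iff it maps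
`d̂X` into `dY`. -/
theorem stmt_5 {X Y : Type*} [TopologicalSpace X] [TopologicalSpace Y]
    (D : DSpace X) (E : DSpace Y) (hE : IsSaturated E.d) (f : C(X, Y)) :
    (∀ p ∈ D.d, f.comp p ∈ E.d) ↔ (∀ p ∈ satPaths D.d, f.comp p ∈ E.d) := by
  refine ⟨fun hf p hp => ?_, fun hf p hp => hf p (D.d_subset_satPaths hp)⟩
  rw [← hE]
  exact IsWeaklyDirected.map hf hp
end

section
/- Let (X, dX) and (Y, dY) be d-spaces with (Y, dY) saturated, and let f : X → Y be a continuous map. Suppose that for every open V ⊆ Y and every directed function c on V, the map c ∘ f is a directed function on the open subset f⁻¹(V) of X. Then f is a morphism of d-spaces, i.e., f ∘ p ∈ dY for every p ∈ dX. -/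
open unitInterval Topology Set

/-! A path in a d-space is weakly directed: clamping time to a small interval `[a, b]` around `t`
is a monotone reparametrization keeping the path inside `U`, and it fixes `[a, b]` pointwise.
Since `f` pulls directed functions back to directed functions, `f ∘ p` is then weakly directed
in `Y`, hence directed by saturation. -/

namespace DSpace

variable {X : Type*} [TopologicalSpace X] (D : DSpace X)

theorem monotoneOn_comp_of_Icc_subset_s7 {p : C(I, X)} (hp : p ∈ D.d) {U : Set X}
    {c : X → I} (hc : IsDirectedFn D.d U c) {a b : I} (hab : a ≤ b)
    (hsub : Icc a b ⊆ p ⁻¹' U) : MonotoneOn (c ∘ p) (Icc a b) := by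
  let clamp : C(I, I) := ⟨fun s => projIcc a b hab s, by fun_prop⟩
  have hclamp : p.comp clamp ∈ D.d :=
    D.reparam_mem p hp clamp (Subtype.mono_coe _ |>.comp (monotone_projIcc hab))
  have hrange : range (p.comp clamp) ⊆ U := by
    rintro _ ⟨s, rfl⟩
    exact hsub (projIcc a b hab s).2
  have hfix : ∀ s ∈ Icc a b, clamp s = s := fun s hs =>
    congrArg Subtype.val (projIcc_of_mem hab hs)
  intro x hx y hy hxy
  have := hc.2 _ hclamp hrange hxy
  rwa [Function.comp_apply, Function.comp_apply, ContinuousMap.comp_apply,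
    ContinuousMap.comp_apply, hfix x hx, hfix y hy] at this

theorem subset_satPaths : D.d ⊆ satPaths D.d := by
  intro p hp U hU c hc t ht
  obtain ⟨a, b, hab, hnhds, hsub⟩ :=
    exists_Icc_mem_subset_of_mem_nhds ((hU.preimage p.continuous).mem_nhds ht)
  exact ⟨Icc a b, hnhds, hsub, D.monotoneOn_comp_of_Icc_subset_s7 hp hc (hab.1.trans hab.2) hsub⟩

end DSpace

theorem IsWeaklyDirected.continuousMap_comp {X Y : Type*} [TopologicalSpace X]
    [TopologicalSpace Y] {dX : Set C(I, X)} {dY : Set C(I, Y)} {p : C(I, X)}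
    (hp : IsWeaklyDirected dX p) {f : C(X, Y)}
    (hf : ∀ V : Set Y, IsOpen V → ∀ c : Y → I, IsDirectedFn dY V c →
      IsDirectedFn dX (f ⁻¹' V) (c ∘ f)) :
    IsWeaklyDirected dY (f.comp p) := fun U hU c hc t ht =>
  hp (f ⁻¹' U) (hU.preimage f.continuous) (c ∘ f) (hf U hU c hc) t ht

/-- A continuous map into a saturated d-space which pulls back (local) directed
functions to (local) directed functions is a morphism of d-spaces. -/
theorem stmt_7 {X Y : Type*} [TopologicalSpace X] [TopologicalSpace Y]
    (D : DSpace X) (E : DSpace Y) (hE : IsSaturated E.d) (f : C(X, Y))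
    (h : ∀ V : Set Y, IsOpen V → ∀ c : Y → unitInterval, IsDirectedFn E.d V c →
      IsDirectedFn D.d (f ⁻¹' V) (c ∘ f)) :
    ∀ p ∈ D.d, f.comp p ∈ E.d := by
  intro p hp
  rw [← hE]
  exact (D.subset_satPaths hp).continuousMap_comp h
end

section
/- Equip I × I with the d-space structure whose directed paths are the continuous maps p : I → I × I both of whose coordinate projections are non-decreasing (this is the product I↑ × I↑ of two directed intervals). This d-space is saturated: every weakly directed path p : I → I × I has both coordinate projections non-decreasing. -/
open unitInterval Topology Set

/-- The product `I↑ × I↑` of two directed intervals: directed paths in `I × I`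
are the continuous paths both of whose coordinate projections are non-decreasing. -/
def dIupSq : Set C(unitInterval, unitInterval × unitInterval) :=
  {p | Monotone (fun t => (p t).1) ∧ Monotone (fun t => (p t).2)}

/-!
The coordinate projections are directed functions on all of `I × I`, so along a weakly
directed path they are locally non-decreasing, hence non-decreasing because `I` is connected.
Conversely, a directed path stays directed after clamping the parameter onto an interval
neighbourhood `[a, b]` of `t` inside `p ⁻¹' U`, so every directed function is non-decreasing
along `p` on `[a, b]`.
-/

section LocalToGlobal

variable {α β : Type*} [LinearOrder α] [Preorder β] {f : α → β}

/-- For `a ∈ s`, `b ∈ t` with `a ≤ b`, order-connectedness puts `a` in `t` or `b` in `s`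
unless `a ≤ c ≤ b`. -/
theorem MonotoneOn.union_of_ordConnected {s t : Set α} {c : α} (hs : MonotoneOn f s)
    (ht : MonotoneOn f t) (hs' : s.OrdConnected) (ht' : t.OrdConnected) (hcs : c ∈ s)
    (hct : c ∈ t) : MonotoneOn f (s ∪ t) := by
  have cross : ∀ {s t : Set α}, MonotoneOn f s → MonotoneOn f t → s.OrdConnected →
      t.OrdConnected → c ∈ s → c ∈ t → ∀ a ∈ s, ∀ b ∈ t, a ≤ b → f a ≤ f b := by
    intro s t hs ht hs' ht' hcs hct a ha b hb hab
    rcases lt_or_ge c a with hca | hac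
    · exact ht (ht'.out hct hb ⟨hca.le, hab⟩) hb hab
    rcases lt_or_ge b c with hbc | hcb
    · exact hs ha (hs'.out ha hcs ⟨hab, hbc.le⟩) hab
    exact (hs ha hcs hac).trans (ht hct hb hcb)
  rintro a (ha | ha) b (hb | hb) hab
  · exact hs ha hb hab
  · exact cross hs ht hs' ht' hcs hct a ha b hb hab
  · exact cross ht hs ht' hs' hct hcs a ha b hb hab
  · exact ht ha hb hab

theorem MonotoneOn.uIcc_trans {x y z : α} (hxy : MonotoneOn f (uIcc x y))
    (hyz : MonotoneOn f (uIcc y z)) : MonotoneOn f (uIcc x z) :=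
  (hxy.union_of_ordConnected hyz ordConnected_uIcc ordConnected_uIcc right_mem_uIcc
    left_mem_uIcc).mono uIcc_subset_uIcc_union_uIcc

theorem monotone_of_forall_exists_mem_nhds_monotoneOn [TopologicalSpace α] [OrderTopology α]
    [PreconnectedSpace α] (h : ∀ x, ∃ V ∈ 𝓝 x, MonotoneOn f V) : Monotone f := by
  have hlocal : ∀ x, ∀ᶠ y in 𝓝 x, MonotoneOn f (uIcc x y) ∧ MonotoneOn f (uIcc y x) := by
    intro x
    obtain ⟨V, hV, hfV⟩ := h x
    obtain ⟨a, b, hx, hab, habV⟩ := exists_Icc_mem_subset_of_mem_nhds hV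
    filter_upwards [hab] with y hy
    have hxy : uIcc x y ⊆ V := (ordConnected_Icc.uIcc_subset hx hy).trans habV
    exact ⟨hfV.mono hxy, hfV.mono (uIcc_comm y x ▸ hxy)⟩
  intro x y hxy
  have hmono := PreconnectedSpace.induction₂' (fun x y => MonotoneOn f (uIcc x y)) hlocal
    ⟨fun _ _ _ => MonotoneOn.uIcc_trans⟩ x y
  exact hmono left_mem_uIcc right_mem_uIcc hxy

end LocalToGlobal

section Saturation

variable {X : Type*} [TopologicalSpace X] {d : Set C(I, X)}

theorem IsWeaklyDirected.monotone_comp {p : C(I, X)} (hp : IsWeaklyDirected d p)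
    {c : X → I} (hc : IsDirectedFn d univ c) : Monotone (c ∘ p) :=
  monotone_of_forall_exists_mem_nhds_monotoneOn fun t =>
    let ⟨V, hV, _, hmono⟩ := hp univ isOpen_univ c hc t (mem_univ _)
    ⟨V, hV, hmono⟩

noncomputable def clampIcc {a b : I} (hab : a ≤ b) : C(I, I) :=
  ⟨fun s => projIcc a b hab s, continuous_subtype_val.comp continuous_projIcc⟩

theorem monotone_clampIcc {a b : I} (hab : a ≤ b) : Monotone (clampIcc hab) :=
  fun _ _ h => monotone_projIcc hab h

theorem clampIcc_mem {a b : I} (hab : a ≤ b) (s : I) : clampIcc hab s ∈ Icc a b :=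
  (projIcc a b hab s).2

theorem clampIcc_of_mem {a b : I} (hab : a ≤ b) {s : I} (hs : s ∈ Icc a b) :
    clampIcc hab s = s :=
  congrArg Subtype.val (projIcc_of_mem hab hs)

theorem subset_satPaths_of_comp_mem (hd : ∀ p ∈ d, ∀ φ : C(I, I), Monotone φ → p.comp φ ∈ d) :
    d ⊆ satPaths d := by
  intro p hp U hU c hc t ht
  obtain ⟨a, b, hab, habt, habU⟩ :=
    exists_Icc_mem_subset_of_mem_nhds ((hU.preimage p.continuous).mem_nhds ht)
  have hab' : a ≤ b := hab.1.trans hab.2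
  have hrange : range (p.comp (clampIcc hab')) ⊆ U := by
    rintro _ ⟨s, rfl⟩
    exact habU (clampIcc_mem hab' s)
  have hmono := hc.2 _ (hd p hp _ (monotone_clampIcc hab')) hrange
  refine ⟨Icc a b, habt, habU, fun u hu v hv huv => ?_⟩
  simpa [Function.comp_def, clampIcc_of_mem hab' hu, clampIcc_of_mem hab' hv] using hmono huv

end Saturation

/-- The product `I↑ × I↑` of two directed intervals is saturated: the weakly
directed paths are exactly those whose coordinate projections are non-decreasing. -/
theorem stmt_9 : IsSaturated dIupSq := by
  have hfst : IsDirectedFn dIupSq univ Prod.fst :=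
    ⟨continuous_fst.continuousOn, fun _ hq _ => hq.1⟩
  have hsnd : IsDirectedFn dIupSq univ Prod.snd :=
    ⟨continuous_snd.continuousOn, fun _ hq _ => hq.2⟩
  refine Subset.antisymm (fun p hp => ⟨hp.monotone_comp hfst, hp.monotone_comp hsnd⟩) ?_
  exact subset_satPaths_of_comp_mem fun p hp φ hφ => ⟨hp.1.comp hφ, hp.2.comp hφ⟩
end

section
/- Maximality of the saturation among d-saturation processes: let S be an assignment which, to every d-space (X, dX), assigns a set S(X, dX) of continuous paths I → X such that (i) (X, S(X, dX)) is a d-space and dX ⊆ S(X, dX); (ii) for every morphism of d-spaces f : (X, dX) → (Y, dY), f maps S(X, dX) into S(Y, dY); (iii) S(I, dI↑) = dI↑, where I↑ = (I, dI↑) is the directed interval; (iv) (locality) for every subset Y ⊆ X with the subspace topology, setting dY = {p ∈ dX : p(I) ⊆ Y}, every path in S(X, dX) with image contained in Y belongs to S(Y, dY). Then for every d-space (X, dX), every path in S(X, dX) is weakly directed in (X, dX), i.e., S(X, dX) ⊆ d̂X. -/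
/-!
Let `p ∈ S(X, dX)`, `c` a directed function on an open `U` and `p t ∈ U`. Choose an interval
`[a, b]` that is a neighbourhood of `t` with `p [a, b] ⊆ U`, and let `φ` be the clamp of `I`
onto `[a, b]`: it is monotone, so `p ∘ φ ∈ S(X, dX)`, and it lies in `U`. Restricted to `U`,
`c` is a morphism from the subspace `U` to `I↑`, so locality and functoriality put
`c ∘ p ∘ φ` in `S(I, dI↑) = dI↑`, i.e. it is monotone. As `φ` is the identity on `[a, b]`,
`c ∘ p` is monotone there.
-/

open unitInterval Topology Set

/-- The directed paths of the subspace `Y ⊆ X` induced by a set `d` of directed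
paths on `X`: those paths into `Y` that are directed in `X`. -/
def subPaths {X : Type*} [TopologicalSpace X] (d : Set C(unitInterval, X)) (Y : Set X) :
    Set C(unitInterval, Y) :=
  {q | (⟨Subtype.val, continuous_subtype_val⟩ : C(Y, X)).comp q ∈ d}

/-- The directed interval `I↑`: non-decreasing continuous self-maps of `I`. -/
def dIup : Set C(unitInterval, unitInterval) := {φ | Monotone ⇑φ}

lemma concatPath_apply {X : Type*} [TopologicalSpace X]
    (p q : C(I, X)) (h : p 1 = q 0) (t : I) :
    concatPath p q h t =
      if h' : (t : ℝ) ≤ 1 / 2 then p ⟨2 * t, (mul_pos_mem_iff zero_lt_two).2 ⟨t.2.1, h'⟩⟩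
      else q ⟨2 * t - 1, two_mul_sub_one_mem_iff.2 ⟨(not_le.1 h').le, t.2.2⟩⟩ :=
  Path.trans_apply _ _ t

lemma ContinuousMap.comp_concatPath {X Y : Type*} [TopologicalSpace X] [TopologicalSpace Y]
    (f : C(X, Y)) (p q : C(I, X)) (h : p 1 = q 0) :
    f.comp (concatPath p q h) = concatPath (f.comp p) (f.comp q) (by simp [h]) := by
  ext t
  simp only [ContinuousMap.comp_apply, concatPath_apply]
  split_ifs <;> rfl

lemma Monotone.concatPath {p q : C(I, I)} (h : p 1 = q 0) (hp : Monotone p) (hq : Monotone q) :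
    Monotone (concatPath p q h) := by
  intro x y hxy
  have hxy' : (x : ℝ) ≤ y := hxy
  rw [concatPath_apply, concatPath_apply]
  split_ifs with hx hy hy
  · exact hp (Subtype.coe_le_coe.1 (by push_cast; linarith))
  · calc p _ ≤ p 1 := hp le_one'
      _ = q 0 := h
      _ ≤ q _ := hq nonneg'
  · exact absurd (hxy'.trans hy) hx
  · exact hq (Subtype.coe_le_coe.1 (by push_cast; linarith))

def DSpace.directedInterval : DSpace I where
  d := dIup
  const_mem _ := monotone_const
  concat_mem _ hp _ hq h := hp.concatPath h hq
  reparam_mem _ hp _ hφ := hp.comp hφ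

def DSpace.subspace {X : Type*} [TopologicalSpace X] (D : DSpace X) (Y : Set X) : DSpace Y where
  d := subPaths D.d Y
  const_mem y := D.const_mem y
  concat_mem p hp q hq h := by
    rw [subPaths, Set.mem_ofPred_eq, ContinuousMap.comp_concatPath]
    exact D.concat_mem _ hp _ hq _
  reparam_mem p hp φ hφ := D.reparam_mem _ hp φ hφ

theorem monotone_comp_of_isDirectedFn
    (S : ∀ (X : Type) [TopologicalSpace X], Set C(unitInterval, X) → Set C(unitInterval, X))
    (hfunc : ∀ (X Y : Type) [TopologicalSpace X] [TopologicalSpace Y]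
      (D : DSpace X) (E : DSpace Y) (f : C(X, Y)),
      (∀ p ∈ D.d, f.comp p ∈ E.d) → ∀ p ∈ S X D.d, f.comp p ∈ S Y E.d)
    (hI : S unitInterval dIup = dIup)
    (hloc : ∀ (X : Type) [TopologicalSpace X] (D : DSpace X) (Y : Set X),
      ∀ p ∈ S X D.d, ∀ hr : ∀ t, p t ∈ Y,
        (ContinuousMap.mk (fun t => (⟨p t, hr t⟩ : Y)) (by fun_prop)) ∈ S Y (subPaths D.d Y))
    {X : Type} [TopologicalSpace X] (D : DSpace X) {U : Set X} {c : X → I}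
    (hc : IsDirectedFn D.d U c) {p : C(I, X)} (hp : p ∈ S X D.d) (hpU : ∀ t, p t ∈ U) :
    Monotone (c ∘ p) := by
  let cU : C(U, I) := ⟨U.domRestrict c, hc.1.domRestrict⟩
  have hcU : ∀ r ∈ (D.subspace U).d, cU.comp r ∈ DSpace.directedInterval.d :=
    fun r hr => hc.2 _ hr (range_subset_iff.2 fun s => (r s).2)
  have := hfunc U I _ _ cU hcU _ (hloc X D U p hp hpU)
  rwa [DSpace.directedInterval, hI] at this

/-- Maximality of the saturation among d-saturation processes: if `S` enlarges each
d-space `(X, dX)` to a d-space `(X, S(X, dX))`, functorially, fixing the directed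
interval, and satisfying the locality condition for subspaces, then
`S(X, dX) ⊆ d̂X` for every d-space `(X, dX)`. -/
theorem stmt_19
    (S : ∀ (X : Type) [TopologicalSpace X], Set C(unitInterval, X) → Set C(unitInterval, X))
    -- (i) `(X, S(X, dX))` is a d-space containing `dX`:
    (hdsp : ∀ (X : Type) [TopologicalSpace X] (D : DSpace X),
      (∀ x : X, ContinuousMap.const unitInterval x ∈ S X D.d) ∧
      (∀ p ∈ S X D.d, ∀ q ∈ S X D.d, ∀ h : p 1 = q 0, concatPath p q h ∈ S X D.d) ∧
      (∀ p ∈ S X D.d, ∀ φ : C(unitInterval, unitInterval), Monotone ⇑φ →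
        p.comp φ ∈ S X D.d))
    -- (ii) functoriality: morphisms `(X, dX) → (Y, dY)` are morphisms on `S`-structures:
    (hfunc : ∀ (X Y : Type) [TopologicalSpace X] [TopologicalSpace Y]
      (D : DSpace X) (E : DSpace Y) (f : C(X, Y)),
      (∀ p ∈ D.d, f.comp p ∈ E.d) → ∀ p ∈ S X D.d, f.comp p ∈ S Y E.d)
    -- (iii) `S` fixes the directed interval:
    (hI : S unitInterval dIup = dIup)
    -- (iv) locality: paths of `S(X, dX)` with image in a subspace `Y` are in `S(Y, dY)`:
    (hloc : ∀ (X : Type) [TopologicalSpace X] (D : DSpace X) (Y : Set X),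
      ∀ p ∈ S X D.d, ∀ hr : ∀ t, p t ∈ Y,
        (ContinuousMap.mk (fun t => (⟨p t, hr t⟩ : Y)) (by fun_prop)) ∈ S Y (subPaths D.d Y)) :
    ∀ (X : Type) [TopologicalSpace X] (D : DSpace X), S X D.d ⊆ satPaths D.d := by
  intro X _ D p hp U hU c hc t ht
  obtain ⟨a, b, htab, hab_nhds, hab_sub⟩ :=
    exists_Icc_mem_subset_of_mem_nhds ((hU.preimage p.continuous).mem_nhds ht)
  have hab : a ≤ b := htab.1.trans htab.2
  let φ : C(I, I) := ⟨fun s => projIcc a b hab s, by fun_prop⟩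
  have hφ : Monotone φ := fun _ _ h => monotone_projIcc hab h
  have hφ_id : ∀ s ∈ Icc a b, φ s = s := fun s hs => congrArg Subtype.val (projIcc_of_mem hab hs)
  have hmono : Monotone (c ∘ p.comp φ) :=
    monotone_comp_of_isDirectedFn S hfunc hI hloc D hc ((hdsp X D).2.2 p hp φ hφ)
      fun s => hab_sub (projIcc a b hab s).2
  refine ⟨Icc a b, hab_nhds, hab_sub, fun x hx y hy hxy => ?_⟩
  simpa only [Function.comp_apply, ContinuousMap.comp_apply, hφ_id x hx, hφ_id y hy] using
    hmono hxy
end
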